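/- Let A be a group such that C(A) = C_q(A) and such that S_A G = T_A G for every group G. Then C(A) = C̄(A): the smallest class containing A closed under isomorphisms and direct limits coincides with the smallest class containing A closed under isomorphisms, direct limits and extensions. -/

import Mathlib

open CategoryTheory Limits

universe u v

/-- A class of groups closed under isomorphisms. -/
def IsoClosed (C : GrpCat.{u} → Prop) : Prop :=
  ∀ ⦃G H : GrpCat.{u}⦄, (G ≅ H) → C G → C H

/-- A class of groups is closed under direct limits if it contains the colimit
(computed in the category of groups) of every small diagram all of whose
objects belong to the class. -/
def ColimClosed (C : GrpCat.{u} → Prop) : Prop :=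
  ∀ (J : Type u) [SmallCategory J] (F : J ⥤ GrpCat.{u}) (c : Cocone F),
    IsColimit c → (∀ j, C (F.obj j)) → C c.pt

/-- A class of groups is closed under quotients if it contains the image of
every surjective homomorphism out of one of its members. -/
def QuotClosed (C : GrpCat.{u} → Prop) : Prop :=
  ∀ (G Q : GrpCat.{u}) (π : (G : Type u) →* Q),
    Function.Surjective π → C G → C Q

/-- A class of groups is closed under extensions if whenever
`1 → N → G → Q → 1` is a short exact sequence with `N` and `Q` in the class,
then `G` is in the class. -/
def ExtClosed (C : GrpCat.{u} → Prop) : Prop :=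
  ∀ (N G Q : GrpCat.{u}) (ι : (N : Type u) →* G) (π : (G : Type u) →* Q),
    Function.Injective ι → Function.Surjective π → ι.range = π.ker →
    C N → C Q → C G

/-- `C(A)`: the smallest class of groups containing `A` and closed under
isomorphisms and direct limits. -/
def cellClass (A G : GrpCat.{u}) : Prop :=
  ∀ C : GrpCat.{u} → Prop, IsoClosed C → ColimClosed C → C A → C G

/-- `C̄(A)`: the smallest class of groups containing `A` and closed under
isomorphisms, direct limits and extensions. -/
def acyclClass (A G : GrpCat.{u}) : Prop :=
  ∀ C : GrpCat.{u} → Prop, IsoClosed C → ColimClosed C → ExtClosed C → C A → C G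

/-- `C_q(A)`: the smallest class of groups containing `A` and closed under
isomorphisms, direct limits and quotients. -/
def socClass (A G : GrpCat.{u}) : Prop :=
  ∀ C : GrpCat.{u} → Prop, IsoClosed C → ColimClosed C → QuotClosed C → C A → C G

/-- The `A`-socle `S_A G` of `G`: the subgroup of `G` generated by the images
of all homomorphisms `A →* G`. -/
def socle (A : Type u) [Group A] (G : Type v) [Group G] : Subgroup G :=
  ⨆ f : A →* G, f.range

/-- The `A`-radical `T_A G` of `G`: the smallest normal subgroup `N` of `G`
such that every homomorphism from `A` to `G ⧸ N` is trivial. -/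
def radical (A : Type u) [Group A] (G : Type v) [Group G] : Subgroup G :=
  sInf {N : Subgroup G | ∃ _ : N.Normal, ∀ f : A →* G ⧸ N, f = 1}

/-!
Since `C(A) = C_q(A)`, a group `G` lies in `C(A)` exactly when `S_A G = G`: such a `G` is a
quotient of a free product of copies of `A`, and conversely `S_A G = G` passes to colimits
because a colimit is generated by the images of its legs. So it suffices that
`{G | S_A G = G}` is closed under extensions. For `1 → N → G → Q → 1`, the image of `N` lies
in `S_A G ≤ T_A G`, so `G ⧸ T_A G` is a quotient of `Q`; since `Q` is generated by images of
`A` and every map `A → G ⧸ T_A G` is trivial, `T_A G = G`, hence `S_A G = G`.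
-/

section Socle

variable {A : Type*} [Group A]

lemma map_socle_le {G H : Type*} [Group G] [Group H] (φ : G →* H) :
    (socle A G).map φ ≤ socle A H := by
  rw [socle, Subgroup.map_iSup]
  refine iSup_mono' fun f => ⟨φ.comp f, ?_⟩
  rw [MonoidHom.range_comp]

lemma socle_le_ker_iff {G H : Type*} [Group G] [Group H] (φ : G →* H) :
    socle A G ≤ φ.ker ↔ ∀ f : A →* G, φ.comp f = 1 := by
  simp only [socle, iSup_le_iff, MonoidHom.range_le_ker_iff]

lemma socle_self_eq_top : socle A A = ⊤ :=
  top_le_iff.mp fun x _ => le_iSup (fun f : A →* A => f.range) (MonoidHom.id A) ⟨x, rfl⟩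

lemma socle_eq_top_of_surjective {G H : Type*} [Group G] [Group H] {φ : G →* H}
    (hφ : Function.Surjective φ) (hG : socle A G = ⊤) : socle A H = ⊤ := by
  rw [eq_top_iff, ← Subgroup.map_top_of_surjective φ hφ, ← hG]
  exact map_socle_le φ

end Socle

section Radical

variable {A : Type*} [Group A] {G : Type*} [Group G]

instance radical_normal : (radical A G).Normal where
  conj_mem x hx g := Subgroup.mem_sInf.mpr fun N ⟨hN, hNA⟩ =>
    hN.conj_mem x (Subgroup.mem_sInf.mp hx N ⟨hN, hNA⟩) g

lemma comp_eq_one_of_radical {H : Type*} [Group H] (ψ : H →* G ⧸ radical A G) (f : A →* H) :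
    ψ.comp f = 1 := by
  ext a
  obtain ⟨g, hg⟩ := QuotientGroup.mk_surjective (ψ (f a))
  suffices g ∈ radical A G by simpa [← hg]
  refine Subgroup.mem_sInf.mpr fun N hN => ?_
  have hle : radical A G ≤ N := sInf_le hN
  obtain ⟨_, hNA⟩ := hN
  let θ : G ⧸ radical A G →* G ⧸ N := QuotientGroup.map _ _ (MonoidHom.id G) hle
  have h := DFunLike.congr_fun (hNA ((θ.comp ψ).comp f)) a
  rw [MonoidHom.comp_apply, MonoidHom.comp_apply, ← hg] at h
  exact (QuotientGroup.eq_one_iff g).mp h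

lemma socle_le_radical : socle A G ≤ radical A G := by
  simpa using (socle_le_ker_iff (QuotientGroup.mk' (radical A G))).mpr
    (comp_eq_one_of_radical _)

lemma radical_eq_top_of_extension {N Q : Type*} [Group N] [Group Q] {ι : N →* G} {π : G →* Q}
    (hπ : Function.Surjective π) (hexact : π.ker ≤ ι.range)
    (hN : socle A N = ⊤) (hQ : socle A Q = ⊤) : radical A G = ⊤ := by
  let φ := QuotientGroup.mk' (radical A G)
  have hker : π.ker ≤ φ.ker := by
    rw [MonoidHom.range_eq_map, ← hN] at hexact
    rw [QuotientGroup.ker_mk']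
    exact hexact.trans ((map_socle_le ι).trans socle_le_radical)
  let ψ := π.liftOfSurjective hπ ⟨φ, hker⟩
  have hψ : ψ = 1 := by
    rw [← MonoidHom.ker_eq_top_iff, eq_top_iff, ← hQ]
    exact (socle_le_ker_iff ψ).mpr (comp_eq_one_of_radical ψ)
  have hφ : φ = 1 := calc
    φ = ψ.comp π := (π.liftOfRightInverse_comp _ _ ⟨φ, hker⟩).symm
    _ = 1 := by rw [hψ, MonoidHom.one_comp]
  simpa [φ] using congrArg MonoidHom.ker hφ

end Radical

namespace GrpCat

variable {J : Type u} [SmallCategory J] {F : J ⥤ GrpCat.{u}}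

lemma iSup_range_ι_eq_top {c : Cocone F} (hc : IsColimit c) :
    (⨆ j, MonoidHom.range (c.ι.app j).hom : Subgroup c.pt) = ⊤ := by
  -- every leg factors through `K`, and the descended map `c.pt → K` is a section of `K ≤ c.pt`
  set K : Subgroup c.pt := ⨆ j, MonoidHom.range (c.ι.app j).hom
  have hmem (j : J) (x : F.obj j) : (c.ι.app j).hom x ∈ K :=
    Subgroup.mem_iSup_of_mem j ⟨x, rfl⟩
  let c' : Cocone F :=
    { pt := of K
      ι :=
        { app j := ofHom ((c.ι.app j).hom.codRestrict K (hmem j))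
          naturality j j' u := by
            ext x
            exact Subtype.ext (ConcreteCategory.congr_hom (c.w u) x) } }
  have hsection : hc.desc c' ≫ ofHom K.subtype = 𝟙 c.pt :=
    hc.hom_ext fun j => by rw [← Category.assoc, hc.fac c' j]; rfl
  refine eq_top_iff.mpr fun x _ => ?_
  have hx : K.subtype (hc.desc c' x) = x := ConcreteCategory.congr_hom hsection x
  exact hx ▸ (hc.desc c' x).2

variable {ι : Type u} (X : ι → GrpCat.{u})

noncomputable def coprodICofan : Cofan X :=
  Cofan.mk (of (Monoid.CoprodI fun i => X i)) fun i =>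
    ofHom (Monoid.CoprodI.of (M := fun i => X i) (i := i))

noncomputable def coprodICofanIsColimit : IsColimit (coprodICofan X) :=
  Cofan.IsColimit.mk _
    (fun t => ofHom (Monoid.CoprodI.lift (M := fun i => X i) fun i => (t.inj i).hom))
    (fun t i => by ext; exact Monoid.CoprodI.lift_of _ _)
    (fun t m hm => hom_ext <| Monoid.CoprodI.ext_hom _ _ fun i => by
      ext a
      exact (ConcreteCategory.congr_hom (hm i) a).trans (Monoid.CoprodI.lift_of _ _).symm)

end GrpCat

section Classes

variable {A G : GrpCat.{u}}

lemma cellClass_self : cellClass A A := fun _ _ _ hA => hA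

lemma isoClosed_cellClass : IsoClosed (cellClass A) :=
  fun _ _ e hG C hiso hcolim hA => hiso e (hG C hiso hcolim hA)

lemma colimClosed_cellClass : ColimClosed (cellClass A) :=
  fun J _ F c hc hF C hiso hcolim hA => hcolim J F c hc fun j => hF j C hiso hcolim hA

lemma acyclClass_of_cellClass (h : cellClass A G) : acyclClass A G :=
  fun C hiso hcolim _ hA => h C hiso hcolim hA

lemma cellClass_of_acyclClass (hext : ExtClosed (cellClass A)) (h : acyclClass A G) :
    cellClass A G :=
  h _ isoClosed_cellClass colimClosed_cellClass hext cellClass_self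

lemma socle_eq_top_of_cellClass (h : cellClass A G) : socle A G = ⊤ := by
  refine h (fun H => socle A H = ⊤) ?iso ?colim socle_self_eq_top
  case iso => exact fun _ _ e hG => socle_eq_top_of_surjective e.groupIsoToMulEquiv.surjective hG
  case colim =>
    intro J _ F c hc hF
    rw [eq_top_iff, ← GrpCat.iSup_range_ι_eq_top hc]
    refine iSup_le fun j => ?_
    rw [MonoidHom.range_eq_map, ← hF j]
    exact map_socle_le _

/-- `G` is a quotient of the free product of copies of `A`, one for each `A →* G`. -/
lemma socClass_of_socle_eq_top (h : socle A G = ⊤) : socClass A G := by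
  intro C hiso hcolim hquot hA
  let I := A →* G
  have hP : C (GrpCat.of (Monoid.CoprodI fun _ : I => A)) :=
    hcolim _ _ _ (GrpCat.coprodICofanIsColimit _) fun _ => hA
  refine hquot _ G (Monoid.CoprodI.lift fun f : I => f) ?_ hP
  rw [← MonoidHom.range_eq_top, eq_top_iff, ← h]
  refine iSup_le fun f => ?_
  rintro _ ⟨a, rfl⟩
  exact ⟨Monoid.CoprodI.of (i := f) a, Monoid.CoprodI.lift_of _ _⟩

end Classes

lemma extClosed_socle_eq_top {A : Type u} [Group A]
    (hA : ∀ G : GrpCat.{u}, socle A G = radical A G) : ExtClosed.{u} fun G => socle A G = ⊤ :=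
  fun _ G _ _ _ _ hπ hexact hN hQ => (hA G).trans (radical_eq_top_of_extension hπ hexact.ge hN hQ)

/-- If `C(A) = C_q(A)` and `S_A G = T_A G` for every group `G`, then
`C(A) = C̄(A)`. -/
theorem stmt16 (A : GrpCat.{u})
    (h1 : ∀ G : GrpCat.{u}, cellClass A G ↔ socClass A G)
    (h2 : ∀ G : GrpCat.{u},
      socle (A : Type u) (G : Type u) = radical (A : Type u) (G : Type u)) :
    ∀ G : GrpCat.{u}, cellClass A G ↔ acyclClass A G := by
  have hcell : cellClass A = fun G : GrpCat.{u} => socle A G = ⊤ := funext fun G => propext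
    ⟨socle_eq_top_of_cellClass, fun h => (h1 G).mpr (socClass_of_socle_eq_top h)⟩
  have hext : ExtClosed (cellClass A) := hcell ▸ extClosed_socle_eq_top h2
  exact fun G => ⟨acyclClass_of_cellClass, cellClass_of_acyclClass hext⟩
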